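/- Let τ ∈ ℍ be such that 1 and τ span a lattice Γ_τ = ℤ + τℤ, and let a, b ∈ ℝ \ ℚ with 0 < a, b < 1. Consider period matrices P_a = ((0,1,τ),(1,0,a)) and P_b = ((0,1,τ),(1,0,b)). If there exist M ∈ GL(2, ℂ) and A ∈ GL(3, ℤ) with P_a = M P_b A, then the only possible A are ±I₃ and ±((1,0,1),(0,−1,0),(0,0,−1)); consequently P_a ∼ P_b if and only if a = b or a = 1 − b. -/

import Mathlib

/-
Over `ℂ` the kernel of `P_a` is spanned by `v_a = (-a, -τ, 1)`, so `P_a = M P_b A` forces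
`P_b (A v_a) = 0`. Separating the two coordinates of this equation along the `ℝ`-basis `1, τ`
of `ℂ`, and then along `1, a` and `1, b` (linearly independent over `ℚ` since `a, b` are
irrational), forces `A = ((s,0,n),(0,t,0),(0,0,t))` with `n = s a - t b`. Then `det A = s t²`
makes `s, t` signs, and since `a, b ∈ (0,1)` the integer `n = ±(a - b)` or `±(a + b)` is `0`
(and `a = b`) or `±1` (and `a + b = 1`).
-/

noncomputable def periodMatrix (τ : ℂ) (a : ℝ) : Matrix (Fin 2) (Fin 3) ℂ :=
  !![0, 1, τ; 1, 0, (a : ℂ)]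

open Matrix

lemma Irrational.intCast_add_mul_intCast_eq_zero {x : ℝ} (hx : Irrational x) {m n : ℤ}
    (h : (m : ℝ) + x * n = 0) : m = 0 ∧ n = 0 := by
  obtain rfl : n = 0 := by
    by_contra hn
    exact ((hx.mul_intCast hn).intCast_add m).ne_zero h
  exact ⟨by simpa using h, rfl⟩

lemma Complex.ofReal_add_mul_ofReal_eq_zero {τ : ℂ} (hτ : τ.im ≠ 0) {p q : ℝ}
    (h : (p : ℂ) + τ * q = 0) : p = 0 ∧ q = 0 := by
  have hq : q = 0 := by
    simpa [hτ] using congrArg Complex.im h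
  subst hq
  exact ⟨by simpa using h, rfl⟩

lemma Int.eq_of_cast_mem_Ioo {n k : ℤ} (h : (n : ℝ) ∈ Set.Ioo ((k : ℝ) - 1) (k + 1)) :
    n = k := by
  obtain ⟨h₁, h₂⟩ := h
  have : k - 1 < n ∧ n < k + 1 := ⟨by exact_mod_cast h₁, by exact_mod_cast h₂⟩
  omega

lemma Matrix.mulVec_mulVec_eq_zero_of_eq_mul_mul {R m n k : Type*} [CommRing R]
    [Fintype m] [DecidableEq m] [Fintype n] [Fintype k]
    {P : Matrix m k R} {M : Matrix m m R} {Q : Matrix m n R} {B : Matrix n k R}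
    (hM : IsUnit M.det) (h : P = M * Q * B) {v : k → R} (hv : P *ᵥ v = 0) :
    Q *ᵥ (B *ᵥ v) = 0 := by
  calc Q *ᵥ (B *ᵥ v) = (M⁻¹ * M) *ᵥ (Q *ᵥ (B *ᵥ v)) := by
        rw [nonsing_inv_mul M hM, one_mulVec]
    _ = M⁻¹ *ᵥ (P *ᵥ v) := by simp only [h, mulVec_mulVec, Matrix.mul_assoc]
    _ = 0 := by rw [hv, mulVec_zero]

lemma intCast_eq_sub_cases {a b : ℝ} (ha0 : 0 < a) (ha1 : a < 1) (hb0 : 0 < b) (hb1 : b < 1)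
    {s t n : ℤ} (hs : s = 1 ∨ s = -1) (ht : t = 1 ∨ t = -1) (h : (n : ℝ) = s * a - t * b) :
    ((s = 1 ∧ t = 1 ∧ n = 0 ∨ s = -1 ∧ t = -1 ∧ n = 0) ∧ a = b) ∨
      ((s = 1 ∧ t = -1 ∧ n = 1 ∨ s = -1 ∧ t = 1 ∧ n = -1) ∧ a = 1 - b) := by
  rcases hs with rfl | rfl <;> rcases ht with rfl | rfl <;> push_cast at h
  · obtain rfl : n = 0 :=
      Int.eq_of_cast_mem_Ioo ⟨by push_cast; linarith, by push_cast; linarith⟩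
    exact Or.inl ⟨Or.inl ⟨rfl, rfl, rfl⟩, by push_cast at h; linarith⟩
  · obtain rfl : n = 1 :=
      Int.eq_of_cast_mem_Ioo ⟨by push_cast; linarith, by push_cast; linarith⟩
    exact Or.inr ⟨Or.inl ⟨rfl, rfl, rfl⟩, by push_cast at h; linarith⟩
  · obtain rfl : n = -1 :=
      Int.eq_of_cast_mem_Ioo ⟨by push_cast; linarith, by push_cast; linarith⟩
    exact Or.inr ⟨Or.inr ⟨rfl, rfl, rfl⟩, by push_cast at h; linarith⟩
  · obtain rfl : n = 0 :=
      Int.eq_of_cast_mem_Ioo ⟨by push_cast; linarith, by push_cast; linarith⟩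
    exact Or.inl ⟨Or.inr ⟨rfl, rfl, rfl⟩, by push_cast at h; linarith⟩

section PeriodMatrix

variable {τ : ℂ} {a b : ℝ}

lemma periodMatrix_mulVec_eq_zero_iff (w : Fin 3 → ℂ) :
    periodMatrix τ b *ᵥ w = 0 ↔ w 1 + τ * w 2 = 0 ∧ w 0 + b * w 2 = 0 := by
  simp [periodMatrix, funext_iff, Fin.forall_fin_two, dotProduct, Fin.sum_univ_three]

lemma periodMatrix_mulVec_kernel : periodMatrix τ a *ᵥ ![-(a : ℂ), -τ, 1] = 0 := by
  simp [periodMatrix_mulVec_eq_zero_iff]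

lemma intCast_mulVec_kernel_apply (A : Matrix (Fin 3) (Fin 3) ℤ) (i : Fin 3) :
    (A.map (fun x : ℤ => (x : ℂ)) *ᵥ ![-(a : ℂ), -τ, 1]) i =
      A i 2 - a * A i 0 - τ * A i 1 := by
  simp only [mulVec, dotProduct, map_apply, Fin.sum_univ_three, cons_val_zero, cons_val_one,
    cons_val, mul_neg, mul_one]
  ring

lemma eq_of_periodMatrix_mulVec_intCast_mulVec_kernel (hτ : τ.im ≠ 0) (ha : Irrational a)
    (hb : Irrational b) {A : Matrix (Fin 3) (Fin 3) ℤ}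
    (h : periodMatrix τ b *ᵥ (A.map (fun x : ℤ => (x : ℂ)) *ᵥ ![-(a : ℂ), -τ, 1]) = 0) :
    A = !![A 0 0, 0, A 0 2; 0, A 1 1, 0; 0, 0, A 1 1] ∧
      (A 0 2 : ℝ) = A 0 0 * a - A 1 1 * b := by
  rw [periodMatrix_mulVec_eq_zero_iff] at h
  simp only [intCast_mulVec_kernel_apply] at h
  obtain ⟨row0, row1⟩ := h
  obtain ⟨hre1, him1⟩ := Complex.ofReal_add_mul_ofReal_eq_zero hτ
    (p := A 0 2 - a * A 0 0 + b * A 2 2 - a * b * A 2 0) (q := -(A 0 1 + b * A 2 1))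
    (by push_cast; linear_combination row1)
  obtain ⟨h01, h21⟩ :=
    hb.intCast_add_mul_intCast_eq_zero (m := A 0 1) (n := A 2 1) (by linarith)
  -- `A 2 1 = 0` removes the `τ²` term from the first coordinate, which is then linear in `τ`.
  obtain ⟨hre0, him0⟩ := Complex.ofReal_add_mul_ofReal_eq_zero hτ
    (p := A 1 2 - a * A 1 0) (q := A 2 2 - A 1 1 - a * A 2 0)
    (by rw [h21] at row0; push_cast at row0 ⊢; linear_combination row0)
  obtain ⟨h12, h10⟩ := ha.intCast_add_mul_intCast_eq_zero (m := A 1 2) (n := -A 1 0)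
    (by push_cast; linarith)
  obtain ⟨h22, h20⟩ := ha.intCast_add_mul_intCast_eq_zero (m := A 2 2 - A 1 1) (n := -A 2 0)
    (by push_cast; linarith)
  rw [neg_eq_zero] at h10 h20
  rw [sub_eq_zero] at h22
  refine ⟨?_, ?_⟩
  · ext i j
    fin_cases i <;> fin_cases j <;> simp [h01, h21, h12, h22, h10, h20]
  · rw [h20, h22] at hre1
    push_cast at hre1
    linarith

theorem periodMatrix_eq_mul_mul_cases (hτ : τ.im ≠ 0) (ha : Irrational a) (hb : Irrational b)
    (ha0 : 0 < a) (ha1 : a < 1) (hb0 : 0 < b) (hb1 : b < 1)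
    {M : Matrix (Fin 2) (Fin 2) ℂ} {A : Matrix (Fin 3) (Fin 3) ℤ} (hM : IsUnit M.det)
    (hA : IsUnit A.det)
    (h : periodMatrix τ a = M * periodMatrix τ b * A.map (fun x : ℤ => (x : ℂ))) :
    ((A = 1 ∨ A = -1) ∧ a = b) ∨
      ((A = !![1, 0, 1; 0, -1, 0; 0, 0, -1] ∨ A = -(!![1, 0, 1; 0, -1, 0; 0, 0, -1])) ∧
        a = 1 - b) := by
  obtain ⟨hAeq, hrel⟩ := eq_of_periodMatrix_mulVec_intCast_mulVec_kernel hτ ha hb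
    (mulVec_mulVec_eq_zero_of_eq_mul_mul hM h periodMatrix_mulVec_kernel)
  have hdet : IsUnit (A 0 0 * A 1 1 * A 1 1) := by
    rw [hAeq, det_fin_three] at hA
    simpa using hA
  have hs := Int.isUnit_iff.mp (isUnit_of_mul_isUnit_left (isUnit_of_mul_isUnit_left hdet))
  have ht := Int.isUnit_iff.mp (isUnit_of_mul_isUnit_right hdet)
  rcases intCast_eq_sub_cases ha0 ha1 hb0 hb1 hs ht hrel with
    ⟨⟨hs, ht, hn⟩ | ⟨hs, ht, hn⟩, hab⟩ | ⟨⟨hs, ht, hn⟩ | ⟨hs, ht, hn⟩, hab⟩ <;>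
    rw [hs, ht, hn] at hAeq <;> simp [hAeq, hab, one_fin_three]

lemma periodMatrix_one_sub (b : ℝ) :
    periodMatrix τ (1 - b) = (!![-1, 0; 0, 1] : Matrix (Fin 2) (Fin 2) ℂ) * periodMatrix τ b *
      (!![1, 0, 1; 0, -1, 0; 0, 0, -1] : Matrix (Fin 3) (Fin 3) ℤ).map
        (fun x : ℤ => (x : ℂ)) := by
  ext i j
  fin_cases i <;> fin_cases j <;>
    simp [periodMatrix, Matrix.mul_apply, Fin.sum_univ_three, sub_eq_neg_add, add_comm]

end PeriodMatrix

/-- For `τ ∈ ℍ` and irrational `a, b ∈ (0,1)`, if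
`P_a = M P_b A` with `M ∈ GL(2,ℂ)` and `A ∈ GL(3,ℤ)`, then
`A ∈ {±I₃, ±((1,0,1),(0,−1,0),(0,0,−1))}`; consequently `P_a ∼ P_b` iff
`a = b` or `a = 1 − b`. -/
theorem stmt_10 (τ : ℂ) (hτ : 0 < τ.im) (a b : ℝ)
    (ha : Irrational a) (hb : Irrational b)
    (ha0 : 0 < a) (ha1 : a < 1) (hb0 : 0 < b) (hb1 : b < 1) :
    (∀ (M : Matrix (Fin 2) (Fin 2) ℂ) (A : Matrix (Fin 3) (Fin 3) ℤ),
        IsUnit M.det → IsUnit A.det →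
        periodMatrix τ a = M * periodMatrix τ b * A.map (fun x : ℤ => (x : ℂ)) →
        (A = 1 ∨ A = -1 ∨ A = !![1, 0, 1; 0, -1, 0; 0, 0, -1] ∨
          A = -(!![1, 0, 1; 0, -1, 0; 0, 0, -1]))) ∧
    ((∃ (M : Matrix (Fin 2) (Fin 2) ℂ) (A : Matrix (Fin 3) (Fin 3) ℤ),
        IsUnit M.det ∧ IsUnit A.det ∧
        periodMatrix τ a = M * periodMatrix τ b * A.map (fun x : ℤ => (x : ℂ)))
      ↔ (a = b ∨ a = 1 - b)) := by
  refine ⟨fun M A hM hA h ↦ ?_, ⟨fun ⟨M, A, hM, hA, h⟩ ↦ ?_, ?_⟩⟩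
  · have := periodMatrix_eq_mul_mul_cases hτ.ne' ha hb ha0 ha1 hb0 hb1 hM hA h
    tauto
  · have := periodMatrix_eq_mul_mul_cases hτ.ne' ha hb ha0 ha1 hb0 hb1 hM hA h
    tauto
  rintro (rfl | rfl)
  · exact ⟨1, 1, by simp, by simp, by simp⟩
  · refine ⟨!![-1, 0; 0, 1], !![1, 0, 1; 0, -1, 0; 0, 0, -1], ?_, ?_, periodMatrix_one_sub b⟩
    all_goals simp [det_fin_two_of, det_fin_three]
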